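/- Let (G,g) be a connected stable weighted graph with n marked legs p_1,…,p_n, let a = (a_1,…,a_n) ∈ ℤ^n with a_i ≠ 0 for all i and a_1 + ⋯ + a_n = 0, and fix an orientation e ↦ h_e of the edges of G. Then only finitely many harmonic slope assignments s on G with s(p_i) = −a_i for all i are realizable by a strictly positive edge-length function, i.e. admit some ℓ ∈ ℝ_{>0}^{E(G)} with ⟨s,γ⟩_ℓ = 0 for every 1-cycle γ ∈ ker ∂. Consequently, the set { ℓ ∈ ℝ_{>0}^{E(G)} : there exists a harmonic slope assignment s with s(p_i) = −a_i for all i and ⟨s,γ⟩_ℓ = 0 for all γ ∈ ker ∂ } is the intersection of ℝ_{>0}^{E(G)} with a finite union of linear subspaces of ℝ^{E(G)}, each cut out by finitely many homogeneous linear equations with integer coefficients. -/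

import Mathlib

namespace TropDR

open Finset

/-- `Finset.filter` with classical decidability. -/
noncomputable def cfilter {α : Type*} (p : α → Prop) (s : Finset α) : Finset α :=
  @Finset.filter α p (Classical.decPred p) s

/-- A graph with legs: a finite set `X` together with an idempotent root map `rt`
and an involution `inv` fixing every root vertex. -/
structure PGraph where
  X : Type
  [fintypeX : Fintype X]
  [decEqX : DecidableEq X]
  rt : X → X
  inv : X → X
  rt_idem : ∀ x, rt (rt x) = rt x
  inv_invol : ∀ x, inv (inv x) = x
  inv_fix_rt : ∀ x, inv (rt x) = rt x

attribute [instance] PGraph.fintypeX PGraph.decEqX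

namespace PGraph

variable (G : PGraph)

/-- Vertices are the fixed points (= the image) of the root map. -/
def IsVertex (x : G.X) : Prop := G.rt x = x

/-- Half-edges are the non-vertices. -/
def IsHalf (x : G.X) : Prop := G.rt x ≠ x

/-- Legs are the `inv`-fixed half-edges. -/
def IsLeg (x : G.X) : Prop := G.IsHalf x ∧ G.inv x = x

/-- Halves of genuine edges: half-edges moved by the involution. -/
def IsEdgeHalf (x : G.X) : Prop := G.IsHalf x ∧ G.inv x ≠ x

noncomputable def vertexSet : Finset G.X := cfilter (fun x => G.IsVertex x) Finset.univ

noncomputable def legSet : Finset G.X := cfilter (fun x => G.IsLeg x) Finset.univ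

noncomputable def edgeHalfSet : Finset G.X := cfilter (fun x => G.IsEdgeHalf x) Finset.univ

/-- Tangent directions at a vertex `v`: half-edges rooted at `v`. -/
noncomputable def tangents (v : G.X) : Finset G.X :=
  cfilter (fun h => G.IsHalf h ∧ G.rt h = v) Finset.univ

noncomputable def valence (v : G.X) : ℕ := (G.tangents v).card

/-- The number of edges: half the number of edge half-edges. -/
noncomputable def numEdges : ℕ := G.edgeHalfSet.card / 2

noncomputable def numLegs : ℕ := G.legSet.card

noncomputable def numVertices : ℕ := G.vertexSet.card

/-- Connectedness: the equivalence relation generated by `x ∼ rt x` and `x ∼ inv x`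
has a single class (and `X` is nonempty). -/
def Connected : Prop :=
  Nonempty G.X ∧ ∀ x y : G.X, Relation.EqvGen (fun a b => G.rt a = b ∨ G.inv a = b) x y

/-- A subgraph: a subset of `X` closed under the root map and the involution. -/
def IsSubgraph (F : Finset G.X) : Prop :=
  (∀ x ∈ F, G.rt x ∈ F) ∧ (∀ x ∈ F, G.inv x ∈ F)

/-- Valency of `v` inside a subgraph `F`. -/
noncomputable def valIn (F : Finset G.X) (v : G.X) : ℕ := (G.tangents v ∩ F).card

end PGraph

/-- A morphism of graphs: commutes with the root maps and involutions,
and maps no edge into a leg. -/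
structure GraphHom (G' G : PGraph) where
  toFun : G'.X → G.X
  map_rt : ∀ x, toFun (G'.rt x) = G.rt (toFun x)
  map_inv : ∀ x, toFun (G'.inv x) = G.inv (toFun x)
  edge_not_leg : ∀ h, G'.IsEdgeHalf h → ¬ G.IsLeg (toFun h)

/-- A harmonic morphism of graphs: a graph morphism together with a degree function. -/
structure HarmonicHom (G' G : PGraph) extends GraphHom G' G where
  deg : G'.X → ℕ
  deg_edge : ∀ h, G'.IsEdgeHalf h → deg (G'.inv h) = deg h
  deg_zero_iff : ∀ h, G'.IsHalf h → (deg h = 0 ↔ G.IsVertex (toFun h))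
  harmonic : ∀ v', G'.IsVertex v' → ∀ h, G.IsHalf h → G.rt h = toFun v' →
    deg v' = ∑ h' ∈ cfilter (fun h' => toFun h' = h) (G'.tangents v'), deg h'

namespace HarmonicHom

variable {G' G : PGraph} (φ : HarmonicHom G' G)

/-- A harmonic morphism is finite if it has positive degree on every half-edge. -/
def Finite : Prop := ∀ h, G'.IsHalf h → 0 < φ.deg h

/-- The sum of the degrees over the vertex fiber of `v`. -/
noncomputable def vertexFiberDeg (v : G.X) : ℕ :=
  ∑ v' ∈ cfilter (fun v' => φ.toFun v' = v) G'.vertexSet, φ.deg v'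

end HarmonicHom

/-- A weighted graph: a graph together with a genus function on (all elements;
only the values at vertices are relevant). -/
structure WGraph extends PGraph where
  gw : X → ℕ

namespace WGraph

variable (G : WGraph)

/-- The genus of a (connected) weighted graph. -/
noncomputable def genus : ℤ :=
  (G.toPGraph.numEdges : ℤ) - (G.toPGraph.numVertices : ℤ) + 1 +
    ∑ v ∈ G.toPGraph.vertexSet, (G.gw v : ℤ)

/-- The Euler characteristic of a vertex. -/
noncomputable def chiV (v : G.X) : ℤ :=
  2 - 2 * (G.gw v : ℤ) - (G.toPGraph.valence v : ℤ)

/-- The Euler characteristic of a (connected) weighted graph. -/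
noncomputable def chi : ℤ := 2 - 2 * G.genus - (G.toPGraph.numLegs : ℤ)

end WGraph

/-- The ramification degree of a (finite) harmonic morphism of weighted graphs at `v'`. -/
noncomputable def ram {G' G : WGraph} (φ : HarmonicHom G'.toPGraph G.toPGraph) (v' : G'.X) : ℤ :=
  (φ.deg v' : ℤ) * G.chiV (φ.toFun v') - G'.chiV v'

def Unramified {G' G : WGraph} (φ : HarmonicHom G'.toPGraph G.toPGraph) : Prop :=
  ∀ v', G'.toPGraph.IsVertex v' → ram φ v' = 0

def Effective {G' G : WGraph} (φ : HarmonicHom G'.toPGraph G.toPGraph) : Prop :=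
  ∀ v', G'.toPGraph.IsVertex v' → 0 ≤ ram φ v'

/-- A slope assignment on a graph `G`: an integer on each half-edge (extended by zero on
the vertices), antisymmetric on the two halves of every edge. -/
structure SlopeAssignment (G : PGraph) where
  s : G.X → ℤ
  vertex_zero : ∀ x, G.IsVertex x → s x = 0
  edge_antisym : ∀ h, G.IsEdgeHalf h → s (G.inv h) = - s h

/-- A slope assignment is harmonic if the outgoing slopes at every vertex sum to zero. -/
def SlopeAssignment.Harmonic {G : PGraph} (σ : SlopeAssignment G) : Prop :=
  ∀ v, G.IsVertex v → ∑ h ∈ G.tangents v, σ.s h = 0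

/-- `γ` (a simplicial 1-chain, given by its coefficients on the chosen orientation `O` of
the edges) is a 1-cycle: its boundary `Σ_e γ_e·(r(ι h_e) − r(h_e))` vanishes. -/
def IsOneCycle (G : WGraph) (O : Finset G.X) (γ : {h : G.X // h ∈ O} → ℤ) : Prop :=
  ∀ v : G.X, G.toPGraph.IsVertex v →
    ∑ h : {h : G.X // h ∈ O},
      γ h * ((if G.rt (G.inv h.1) = v then (1 : ℤ) else 0) -
        (if G.rt h.1 = v then (1 : ℤ) else 0)) = 0

/-- The edge-length pairing `⟨s,γ⟩_ℓ = Σ_e s(h_e)·γ_e·ℓ(e)`. -/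
noncomputable def lpairing (G : WGraph) (O : Finset G.X) (σ : SlopeAssignment G.toPGraph)
    (γ : {h : G.X // h ∈ O} → ℤ) (ℓ : {h : G.X // h ∈ O} → ℝ) : ℝ :=
  ∑ h : {h : G.X // h ∈ O}, (σ.s h.1 : ℝ) * (γ h : ℝ) * ℓ h

/-!
A length function `ℓ` orthogonal to all 1-cycles integrates to a potential `f` on the
vertices of the connected graph, and `f` increases along every edge of positive slope.
Cutting the graph at a level of `f` strictly inside an edge `h` of slope `s h > 0`, the
harmonicity at the vertices above the cut says that the slopes of the edges crossing the
cut, all of them `≤ 0` and one of them `-s h`, add up to minus the leg slopes above the cut.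
Hence every slope is bounded by `∑ |a i|`, and only finitely many slope assignments are
realizable. For a fixed one, orthogonality to the finitely generated `ℤ`-module of 1-cycles
amounts to finitely many integer linear equations on `ℓ`.
-/

namespace PGraph

variable {G : PGraph}

lemma isVertex_of_rt_eq {x v : G.X} (hx : G.rt x = v) : G.IsVertex v :=
  hx ▸ G.rt_idem x

lemma inv_eq_self_of_isVertex {x : G.X} (hx : G.IsVertex x) : G.inv x = x := by
  have := G.inv_fix_rt x
  rwa [hx] at this

lemma inv_eq_self_of_not_isEdgeHalf {x : G.X} (hx : ¬ G.IsEdgeHalf x) : G.inv x = x := by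
  by_cases hv : G.IsVertex x
  · exact inv_eq_self_of_isVertex hv
  · by_contra hinv
    exact hx ⟨hv, hinv⟩

lemma IsEdgeHalf.inv {x : G.X} (hx : G.IsEdgeHalf x) : G.IsEdgeHalf (G.inv x) := by
  refine ⟨fun hv => hx.2 ?_, by rw [G.inv_invol]; exact Ne.symm hx.2⟩
  have := inv_eq_self_of_isVertex hv
  rwa [G.inv_invol, eq_comm] at this

lemma mem_tangents {v h : G.X} : h ∈ G.tangents v ↔ G.IsHalf h ∧ G.rt h = v := by
  simp [tangents, cfilter]

lemma mem_legSet {q : G.X} : q ∈ G.legSet ↔ G.IsLeg q := by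
  simp [legSet, cfilter]

end PGraph

namespace SlopeAssignment

open Classical

variable {G : PGraph} (σ : SlopeAssignment G)

lemma finite_setOf_forall_abs_le (B : ℤ) : {σ : SlopeAssignment G | ∀ x, |σ.s x| ≤ B}.Finite := by
  have hinj : Function.Injective (SlopeAssignment.s : SlopeAssignment G → G.X → ℤ) := by
    rintro ⟨s, _, _⟩ ⟨s', _, _⟩ (rfl : s = s')
    rfl
  refine ((Set.Finite.pi fun _ => Set.finite_Icc (-B) B).preimage hinj.injOn).subset ?_
  intro σ hσ x _
  exact abs_le.1 (hσ x)

lemma Harmonic.sum_rt_mem_eq_zero {σ : SlopeAssignment G} (hσ : σ.Harmonic) (P : G.X → Prop) :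
    ∑ h with G.IsHalf h ∧ P (G.rt h), σ.s h = 0 := by
  rw [← sum_fiberwise_of_maps_to (t := univ.filter fun v => G.IsVertex v ∧ P v) (g := G.rt)
    fun h hh => mem_filter.2 ⟨mem_univ _, G.rt_idem h, (mem_filter.1 hh).2.2⟩]
  refine sum_eq_zero fun v hv => ?_
  rw [mem_filter] at hv
  have hfiber : {h ∈ univ.filter fun h => G.IsHalf h ∧ P (G.rt h) | G.rt h = v} =
      G.tangents v := by
    ext h
    simp only [mem_filter, mem_univ, true_and, PGraph.mem_tangents]
    constructor
    · exact fun ⟨⟨hh, _⟩, hv⟩ => ⟨hh, hv⟩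
    · rintro ⟨hh, rfl⟩
      exact ⟨⟨hh, hv.2.2⟩, rfl⟩
  rw [hfiber]
  exact hσ v hv.2.1

lemma sum_inner_eq_zero (P : G.X → Prop) :
    ∑ h with G.IsEdgeHalf h ∧ P (G.rt h) ∧ P (G.rt (G.inv h)), σ.s h = 0 := by
  refine sum_involution (fun h _ => G.inv h) (fun h hh => ?_) (fun h hh _ => ?_)
    (fun h hh => ?_) (fun h _ => G.inv_invol h)
  · rw [σ.edge_antisym h (mem_filter.1 hh).2.1, add_neg_cancel]
  · exact (mem_filter.1 hh).2.1.2
  · obtain ⟨hedge, hP, hPinv⟩ := (mem_filter.1 hh).2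
    exact mem_filter.2 ⟨mem_univ _, hedge.inv, hPinv, by rwa [G.inv_invol]⟩

/-- Harmonicity summed over the vertices in `P`: the edges with both ends in `P` cancel. -/
lemma Harmonic.sum_crossing_eq_neg_sum_legs {σ : SlopeAssignment G} (hσ : σ.Harmonic)
    (P : G.X → Prop) :
    ∑ h with G.IsEdgeHalf h ∧ P (G.rt h) ∧ ¬ P (G.rt (G.inv h)), σ.s h =
      - ∑ q with G.IsLeg q ∧ P (G.rt q), σ.s q := by
  have hsplit : ∀ h, (if G.IsHalf h ∧ P (G.rt h) then σ.s h else 0) =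
      (if G.IsLeg h ∧ P (G.rt h) then σ.s h else 0) +
      (if G.IsEdgeHalf h ∧ P (G.rt h) ∧ P (G.rt (G.inv h)) then σ.s h else 0) +
      (if G.IsEdgeHalf h ∧ P (G.rt h) ∧ ¬ P (G.rt (G.inv h)) then σ.s h else 0) := by
    intro h
    simp only [PGraph.IsLeg, PGraph.IsEdgeHalf]
    by_cases h₁ : G.IsHalf h <;> by_cases h₂ : G.inv h = h <;> by_cases h₃ : P (G.rt h) <;>
      by_cases h₄ : P (G.rt (G.inv h)) <;> simp [h₁, h₂, h₃, h₄]
  have htotal := hσ.sum_rt_mem_eq_zero P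
  rw [sum_filter, sum_congr rfl fun h _ => hsplit h, sum_add_distrib, sum_add_distrib,
    ← sum_filter, ← sum_filter, ← sum_filter, σ.sum_inner_eq_zero P] at htotal
  linarith

lemma Harmonic.neg_le_sum_abs_legs_of_crossing {σ : SlopeAssignment G} (hσ : σ.Harmonic)
    (P : G.X → Prop)
    (hout : ∀ h, G.IsEdgeHalf h → P (G.rt h) → ¬ P (G.rt (G.inv h)) → σ.s h ≤ 0)
    {h₀ : G.X} (h₀edge : G.IsEdgeHalf h₀) (h₀out : P (G.rt h₀)) (h₀in : ¬ P (G.rt (G.inv h₀))) :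
    - σ.s h₀ ≤ ∑ q ∈ G.legSet, |σ.s q| :=
  calc - σ.s h₀
      ≤ ∑ h with G.IsEdgeHalf h ∧ P (G.rt h) ∧ ¬ P (G.rt (G.inv h)), - σ.s h :=
        single_le_sum (f := fun h => - σ.s h)
          (fun h hh => neg_nonneg.2 (hout h (mem_filter.1 hh).2.1 (mem_filter.1 hh).2.2.1
            (mem_filter.1 hh).2.2.2))
          (mem_filter.2 ⟨mem_univ _, h₀edge, h₀out, h₀in⟩)
    _ = ∑ q with G.IsLeg q ∧ P (G.rt q), σ.s q := by
        rw [sum_neg_distrib, hσ.sum_crossing_eq_neg_sum_legs, neg_neg]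
    _ ≤ ∑ q with G.IsLeg q ∧ P (G.rt q), |σ.s q| := sum_le_sum fun _ _ => le_abs_self _
    _ ≤ ∑ q ∈ G.legSet, |σ.s q| :=
        sum_le_sum_of_subset_of_nonneg
          (fun q hq => PGraph.mem_legSet.2 (mem_filter.1 hq).2.1) fun _ _ _ => abs_nonneg _

lemma Harmonic.le_sum_abs_legs {σ : SlopeAssignment G} (hσ : σ.Harmonic) (f : G.X → ℝ)
    (hf : ∀ h, G.IsEdgeHalf h → 0 < σ.s h → f (G.rt h) < f (G.rt (G.inv h)))
    {h₀ : G.X} (h₀edge : G.IsEdgeHalf h₀) : σ.s h₀ ≤ ∑ q ∈ G.legSet, |σ.s q| := by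
  rcases le_or_gt (σ.s h₀) 0 with hle | hpos
  · exact hle.trans (sum_nonneg fun _ _ => abs_nonneg _)
  obtain ⟨t, ht₀, ht₁⟩ := exists_between (hf h₀ h₀edge hpos)
  have hout : ∀ h, G.IsEdgeHalf h → t < f (G.rt h) → ¬ t < f (G.rt (G.inv h)) → σ.s h ≤ 0 :=
    fun h hedge hh hh' => not_lt.1 fun hs => hh' (hh.trans (hf h hedge hs))
  have := hσ.neg_le_sum_abs_legs_of_crossing (fun v => t < f v) hout h₀edge.inv ht₁
    (by rw [G.inv_invol]; exact lt_asymm ht₀)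
  rwa [σ.edge_antisym h₀ h₀edge, neg_neg] at this

lemma Harmonic.abs_le_sum_abs_legs {σ : SlopeAssignment G} (hσ : σ.Harmonic) (f : G.X → ℝ)
    (hf : ∀ h, G.IsEdgeHalf h → 0 < σ.s h → f (G.rt h) < f (G.rt (G.inv h))) (x : G.X) :
    |σ.s x| ≤ ∑ q ∈ G.legSet, |σ.s q| := by
  by_cases hv : G.IsVertex x
  · rw [σ.vertex_zero x hv, abs_zero]
    exact sum_nonneg fun _ _ => abs_nonneg _
  by_cases hedge : G.IsEdgeHalf x
  · refine abs_le.2 ⟨?_, hσ.le_sum_abs_legs f hf hedge⟩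
    have := hσ.le_sum_abs_legs f hf hedge.inv
    rw [σ.edge_antisym x hedge] at this
    linarith
  · have hleg : G.IsLeg x := ⟨hv, PGraph.inv_eq_self_of_not_isEdgeHalf hedge⟩
    exact single_le_sum (f := fun q => |σ.s q|) (fun _ _ => abs_nonneg _) (PGraph.mem_legSet.2 hleg)

lemma sum_abs_legs_le {ι : Type*} [Fintype ι] {p : ι → G.X}
    (hp : ∀ q, G.IsLeg q → ∃ i, p i = q) :
    ∑ q ∈ G.legSet, |σ.s q| ≤ ∑ i, |σ.s (p i)| :=
  calc ∑ q ∈ G.legSet, |σ.s q|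
      ≤ ∑ q ∈ univ.image p, |σ.s q| :=
        sum_le_sum_of_subset_of_nonneg
          (fun q hq => mem_image.2 <|
            (hp q (PGraph.mem_legSet.1 hq)).imp fun _ h => ⟨mem_univ _, h⟩)
          fun _ _ _ => abs_nonneg _
    _ ≤ ∑ i, |σ.s (p i)| := sum_image_le_of_nonneg (f := fun q => |σ.s q|) fun _ _ => abs_nonneg _

end SlopeAssignment

section Cycles

variable (G : WGraph) (O : Finset G.X)

noncomputable def edgeBoundary (h : {h : G.X // h ∈ O}) : G.X → ℤ :=
  Pi.single (G.rt (G.inv h.1)) 1 - Pi.single (G.rt h.1) 1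

noncomputable def boundary : ({h : G.X // h ∈ O} → ℤ) →ₗ[ℤ] (G.X → ℤ) :=
  Fintype.linearCombination ℤ (edgeBoundary G O)

lemma boundary_single (h : {h : G.X // h ∈ O}) :
    boundary G O (Pi.single h 1) = edgeBoundary G O h := by
  rw [boundary, Fintype.linearCombination_apply_single, one_smul]

variable {G O}

lemma isOneCycle_iff_boundary_eq_zero {γ : {h : G.X // h ∈ O} → ℤ} :
    IsOneCycle G O γ ↔ boundary G O γ = 0 := by
  have happly : ∀ v, boundary G O γ v = ∑ h : {h : G.X // h ∈ O}, γ h *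
      ((if G.rt (G.inv h.1) = v then 1 else 0) - (if G.rt h.1 = v then 1 else 0)) := by
    intro v
    simp [boundary, Fintype.linearCombination_apply, edgeBoundary, Pi.single_apply, eq_comm]
  refine ⟨fun hγ => funext fun v => ?_, fun hγ v _ => by rw [← happly, hγ, Pi.zero_apply]⟩
  by_cases hv : G.IsVertex v
  · rw [happly, hγ v hv, Pi.zero_apply]
  · have hrt : ∀ x, G.rt x ≠ v := fun x hx => hv (PGraph.isVertex_of_rt_eq hx)
    simp [happly, hrt]

lemma exists_boundary_eq_of_eqvGen (hO : ∀ h, G.IsEdgeHalf h → h ∈ O ∨ G.inv h ∈ O)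
    {x y : G.X} (hxy : Relation.EqvGen (fun a b => G.rt a = b ∨ G.inv a = b) x y) :
    ∃ γ, boundary G O γ = Pi.single (G.rt y) 1 - Pi.single (G.rt x) 1 := by
  induction hxy with
  | rel a b hab =>
    rcases hab with rfl | rfl
    · exact ⟨0, by rw [map_zero, G.rt_idem, sub_self]⟩
    by_cases ha : a ∈ O
    · exact ⟨Pi.single ⟨a, ha⟩ 1, boundary_single G O _⟩
    by_cases hia : G.inv a ∈ O
    · refine ⟨-Pi.single ⟨G.inv a, hia⟩ 1, ?_⟩
      rw [map_neg, boundary_single, edgeBoundary, G.inv_invol, neg_sub]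
    · have hfix := PGraph.inv_eq_self_of_not_isEdgeHalf fun he => (hO a he).elim ha hia
      exact ⟨0, by rw [map_zero, hfix, sub_self]⟩
  | refl a => exact ⟨0, by rw [map_zero, sub_self]⟩
  | symm a b _ ih =>
    obtain ⟨γ, hγ⟩ := ih
    exact ⟨-γ, by rw [map_neg, hγ, neg_sub]⟩
  | trans a b c _ _ ih₁ ih₂ =>
    obtain ⟨γ₁, hγ₁⟩ := ih₁
    obtain ⟨γ₂, hγ₂⟩ := ih₂
    exact ⟨γ₁ + γ₂, by rw [map_add, hγ₁, hγ₂]; abel⟩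

/-- `f x` is `L` of a chain from a base point to `x`; it is well defined because `L` kills
the difference of two such chains, a 1-cycle. -/
lemma exists_potential (hConn : G.Connected) (hO : ∀ h, G.IsEdgeHalf h → h ∈ O ∨ G.inv h ∈ O)
    (L : ({h : G.X // h ∈ O} → ℤ) →ₗ[ℤ] ℝ) (hL : ∀ γ, IsOneCycle G O γ → L γ = 0) :
    ∃ f : G.X → ℝ, ∀ h : {h : G.X // h ∈ O},
      f (G.rt (G.inv h.1)) - f (G.rt h.1) = L (Pi.single h 1) := by
  obtain ⟨x₀⟩ := hConn.1
  choose c hc using fun x => exists_boundary_eq_of_eqvGen hO (hConn.2 x₀ x)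
  refine ⟨fun x => L (c x), fun h => ?_⟩
  have hcycle : IsOneCycle G O (c (G.rt (G.inv h.1)) - c (G.rt h.1) - Pi.single h 1) := by
    rw [isOneCycle_iff_boundary_eq_zero, map_sub, map_sub, hc, hc, boundary_single, edgeBoundary,
      G.rt_idem, G.rt_idem]
    abel
  have := hL _ hcycle
  rw [map_sub, map_sub] at this
  linarith

variable (O)

def Realizes (ℓ : {h : G.X // h ∈ O} → ℝ) (σ : SlopeAssignment G.toPGraph) : Prop :=
  ∀ γ, IsOneCycle G O γ → lpairing G O σ γ ℓ = 0

noncomputable def lpairingLinear (σ : SlopeAssignment G.toPGraph) (ℓ : {h : G.X // h ∈ O} → ℝ) :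
    ({h : G.X // h ∈ O} → ℤ) →ₗ[ℤ] ℝ :=
  Fintype.linearCombination ℤ fun h => (σ.s h.1 : ℝ) * ℓ h

lemma lpairingLinear_apply (σ : SlopeAssignment G.toPGraph) (ℓ : {h : G.X // h ∈ O} → ℝ)
    (γ : {h : G.X // h ∈ O} → ℤ) : lpairingLinear O σ ℓ γ = lpairing G O σ γ ℓ := by
  rw [lpairingLinear, Fintype.linearCombination_apply, lpairing]
  exact sum_congr rfl fun h _ => by rw [zsmul_eq_mul]; ring

variable {O}

lemma Realizes.exists_rising_potential {ℓ : {h : G.X // h ∈ O} → ℝ} {σ : SlopeAssignment G.toPGraph}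
    (hσ : Realizes O ℓ σ) (hℓ : ∀ h, 0 < ℓ h) (hConn : G.Connected)
    (hO : ∀ h, G.IsEdgeHalf h → h ∈ O ∨ G.inv h ∈ O) :
    ∃ f : G.X → ℝ, ∀ h, G.IsEdgeHalf h → 0 < σ.s h → f (G.rt h) < f (G.rt (G.inv h)) := by
  obtain ⟨f, hf⟩ := exists_potential hConn hO (lpairingLinear O σ ℓ)
    fun γ hγ => (lpairingLinear_apply O σ ℓ γ).trans (hσ γ hγ)
  have hstep : ∀ h : {h : G.X // h ∈ O},
      f (G.rt (G.inv h.1)) - f (G.rt h.1) = σ.s h.1 * ℓ h := fun h => by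
    rw [hf, lpairingLinear, Fintype.linearCombination_apply_single, one_smul]
  refine ⟨f, fun h hedge hpos => ?_⟩
  have hpos' : (0 : ℝ) < σ.s h := Int.cast_pos.2 hpos
  rcases hO h hedge with hh | hh
  · have := hstep ⟨h, hh⟩
    nlinarith [hℓ ⟨h, hh⟩]
  · have := hstep ⟨G.inv h, hh⟩
    rw [G.inv_invol, σ.edge_antisym h hedge, Int.cast_neg] at this
    nlinarith [hℓ ⟨G.inv h, hh⟩]

lemma realizes_iff_of_span_eq {m : ℕ} {g : Fin m → {h : G.X // h ∈ O} → ℤ}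
    (hg : Submodule.span ℤ (Set.range g) = LinearMap.ker (boundary G O))
    (ℓ : {h : G.X // h ∈ O} → ℝ) (σ : SlopeAssignment G.toPGraph) :
    Realizes O ℓ σ ↔ ∀ i, ∑ h, ((σ.s h.1 * g i h : ℤ) : ℝ) * ℓ h = 0 := by
  have hpair : ∀ i, lpairingLinear O σ ℓ (g i) = ∑ h, ((σ.s h.1 * g i h : ℤ) : ℝ) * ℓ h :=
    fun i => by
      rw [lpairingLinear_apply, lpairing]
      exact sum_congr rfl fun h _ => by push_cast; ring
  calc Realizes O ℓ σ
      ↔ LinearMap.ker (boundary G O) ≤ LinearMap.ker (lpairingLinear O σ ℓ) := by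
        simp only [Realizes, SetLike.le_def, LinearMap.mem_ker, ← isOneCycle_iff_boundary_eq_zero,
          lpairingLinear_apply]
    _ ↔ ∀ i, ∑ h, ((σ.s h.1 * g i h : ℤ) : ℝ) * ℓ h = 0 := by
        simp only [← hg, Submodule.span_le, Set.range_subset_iff, SetLike.mem_coe,
          LinearMap.mem_ker, hpair]

end Cycles

theorem principal_divisor_locus_is_semilinear_general
    (G : WGraph) (hConn : G.toPGraph.Connected)
    (n : ℕ) (p : Fin n → G.X) (hsurj : ∀ q, G.toPGraph.IsLeg q → ∃ i, p i = q)
    (a : Fin n → ℤ)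
    (O : Finset G.X)
    (hO2 : ∀ h, G.toPGraph.IsEdgeHalf h → (h ∈ O ↔ G.inv h ∉ O)) :
    {σ : SlopeAssignment G.toPGraph |
        σ.Harmonic ∧ (∀ i, σ.s (p i) = - a i) ∧
        ∃ ℓ : {h : G.X // h ∈ O} → ℝ, (∀ h, 0 < ℓ h) ∧
          ∀ γ : {h : G.X // h ∈ O} → ℤ, IsOneCycle G O γ → lpairing G O σ γ ℓ = 0}.Finite ∧
    ∃ (k m : ℕ) (c : Fin k → Fin m → {h : G.X // h ∈ O} → ℤ),
      {ℓ : {h : G.X // h ∈ O} → ℝ |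
          (∀ h, 0 < ℓ h) ∧
          ∃ σ : SlopeAssignment G.toPGraph, σ.Harmonic ∧ (∀ i, σ.s (p i) = - a i) ∧
            ∀ γ : {h : G.X // h ∈ O} → ℤ, IsOneCycle G O γ → lpairing G O σ γ ℓ = 0} =
        {ℓ : {h : G.X // h ∈ O} → ℝ | ∀ h, 0 < ℓ h} ∩
          ⋃ j : Fin k, {ℓ : {h : G.X // h ∈ O} → ℝ |
            ∀ i : Fin m, ∑ h : {h : G.X // h ∈ O}, (c j i h : ℝ) * ℓ h = 0} := by
  have hO : ∀ h, G.IsEdgeHalf h → h ∈ O ∨ G.inv h ∈ O := fun h hh => by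
    have := hO2 h hh
    tauto
  have hfinite : {σ : SlopeAssignment G.toPGraph | σ.Harmonic ∧ (∀ i, σ.s (p i) = - a i) ∧
      ∃ ℓ, (∀ h, 0 < ℓ h) ∧ Realizes O ℓ σ}.Finite := by
    refine (SlopeAssignment.finite_setOf_forall_abs_le (∑ i, |a i|)).subset ?_
    rintro σ ⟨hσ, hlegs, ℓ, hℓ, hreal⟩ x
    obtain ⟨f, hf⟩ := hreal.exists_rising_potential hℓ hConn hO
    refine (hσ.abs_le_sum_abs_legs f hf x).trans ((σ.sum_abs_legs_le hsurj).trans_eq ?_)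
    simp [hlegs]
  obtain ⟨k, e, he⟩ := hfinite.fin_embedding
  obtain ⟨m, g, hg⟩ := Submodule.fg_iff_exists_fin_generating_family.1
    (IsNoetherian.noetherian (LinearMap.ker (boundary G O)))
  refine ⟨hfinite, k, m, fun j i h => (e j).s h * g i h, Set.ext fun ℓ => ?_⟩
  simp only [Set.mem_ofPred_eq, Set.mem_inter_iff, Set.mem_iUnion]
  refine and_congr_right fun hℓ => ⟨fun ⟨σ, hσ, hlegs, hreal⟩ => ?_, fun ⟨j, hj⟩ => ?_⟩
  · obtain ⟨j, rfl⟩ : σ ∈ Set.range e := he ▸ ⟨hσ, hlegs, ℓ, hℓ, hreal⟩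
    exact ⟨j, (realizes_iff_of_span_eq hg ℓ _).1 hreal⟩
  · obtain ⟨hσ, hlegs, -⟩ : e j ∈ _ := he ▸ Set.mem_range_self j
    exact ⟨e j, hσ, hlegs, (realizes_iff_of_span_eq hg ℓ _).2 hj⟩

/-- Let `(G,g)` be a connected stable weighted graph with `n` marked legs
`p 0, …, p (n-1)`, let `a : Fin n → ℤ` consist of nonzero integers summing to zero, and fix
an orientation `O` of the edges of `G` (a choice of one half-edge from every edge).  Then:
(1) only finitely many harmonic slope assignments `σ` on `G` with `σ.s (p i) = −a i` are
realizable by a strictly positive edge-length function (one orthogonal to all 1-cycles in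
the length pairing); consequently (2) the set of strictly positive edge-length functions
realizing some such slope assignment is the intersection of the positive orthant with a
finite union of linear subspaces of `ℝ^{E(G)}`, each cut out by finitely many homogeneous
`ℤ`-linear equations. -/
theorem principal_divisor_locus_is_semilinear
    (G : WGraph) (hConn : G.toPGraph.Connected)
    (hStable : ∀ v, G.toPGraph.IsVertex v → G.chiV v < 0)
    (n : ℕ) (p : Fin n → G.X) (hleg : ∀ i, G.toPGraph.IsLeg (p i))
    (hinj : Function.Injective p) (hsurj : ∀ q, G.toPGraph.IsLeg q → ∃ i, p i = q)
    (a : Fin n → ℤ) (ha : ∀ i, a i ≠ 0) (hsum : ∑ i, a i = 0)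
    (O : Finset G.X) (hO1 : ∀ h ∈ O, G.toPGraph.IsEdgeHalf h)
    (hO2 : ∀ h, G.toPGraph.IsEdgeHalf h → (h ∈ O ↔ G.inv h ∉ O)) :
    {σ : SlopeAssignment G.toPGraph |
        σ.Harmonic ∧ (∀ i, σ.s (p i) = - a i) ∧
        ∃ ℓ : {h : G.X // h ∈ O} → ℝ, (∀ h, 0 < ℓ h) ∧
          ∀ γ : {h : G.X // h ∈ O} → ℤ, IsOneCycle G O γ → lpairing G O σ γ ℓ = 0}.Finite ∧
    ∃ (k m : ℕ) (c : Fin k → Fin m → {h : G.X // h ∈ O} → ℤ),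
      {ℓ : {h : G.X // h ∈ O} → ℝ |
          (∀ h, 0 < ℓ h) ∧
          ∃ σ : SlopeAssignment G.toPGraph, σ.Harmonic ∧ (∀ i, σ.s (p i) = - a i) ∧
            ∀ γ : {h : G.X // h ∈ O} → ℤ, IsOneCycle G O γ → lpairing G O σ γ ℓ = 0} =
        {ℓ : {h : G.X // h ∈ O} → ℝ | ∀ h, 0 < ℓ h} ∩
          ⋃ j : Fin k, {ℓ : {h : G.X // h ∈ O} → ℝ |
            ∀ i : Fin m, ∑ h : {h : G.X // h ∈ O}, (c j i h : ℝ) * ℓ h = 0} :=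
  principal_divisor_locus_is_semilinear_general G hConn n p hsurj a O hO2

end TropDR
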